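/- If (u,θ) is a plane-wave solution of the 2D semi-dissipative Boussinesq system with u = (f(k·x,t), f(k·x,t)), θ = h(k·x), k₁+k₂ = 0, k ≠ 0, and the pressure determined by the equations, then necessarily f satisfies the heat equation ∂_t f = ν|k|² f_{zz} + (g/2)h, and the pressure gradient satisfies p_{x₁} = −(g/2)h(k·x) and p_{x₂} = (g/2)h(k·x). -/

import Mathlib

noncomputable section
open MeasureTheory Real Filter Topology
open scoped RealInnerProductSpace

/-- The 2D Euclidean plane (the torus is realized by `L`-periodic functions). -/
abbrev E2 := EuclideanSpace ℝ (Fin 2)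

/-- Standard basis vector. -/
def eb (i : Fin 2) : E2 := EuclideanSpace.single i 1

/-- Partial derivative of a scalar field. -/
def pd (f : E2 → ℝ) (i : Fin 2) (x : E2) : ℝ := fderiv ℝ f x (eb i)

/-- Gradient of a scalar field. -/
def grad (f : E2 → ℝ) (x : E2) : E2 := gradient f x

/-- Laplacian of a scalar field. -/
def lap (f : E2 → ℝ) (x : E2) : ℝ := ∑ i, pd (fun y => pd f i y) i x

/-- Divergence of a vector field. -/
def divg (u : E2 → E2) (x : E2) : ℝ := ∑ i, fderiv ℝ u x (eb i) i

/-- Componentwise Laplacian of a vector field. -/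
def vecLap (u : E2 → E2) (x : E2) : E2 :=
  ∑ j, EuclideanSpace.single j (lap (fun y => u y j) x)

/-- Fundamental domain `[0,L)²` of the torus. -/
def Q (L : ℝ) : Set E2 := {x | ∀ i, x i ∈ Set.Ico (0:ℝ) L}

/-- `L`-periodicity in each coordinate direction. -/
def Periodic2 {α : Type*} (L : ℝ) (f : E2 → α) : Prop := ∀ x i, f (x + L • eb i) = f x

/-- The upward gravity vector `(0, g)`. -/
def gvec (g : ℝ) : E2 := EuclideanSpace.single 1 g

/-- Classical form of the semi-dissipative 2D Boussinesq system on the time set `I`: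
momentum, transport and incompressibility equations. -/
def Boussinesq (ν g L : ℝ) (I : Set ℝ) (u : ℝ → E2 → E2) (θ p : ℝ → E2 → ℝ) : Prop :=
  ∀ t ∈ I, ∀ x : E2,
    deriv (fun s => u s x) t + fderiv ℝ (u t) x (u t x) + grad (p t) x
        = ν • vecLap (u t) x + θ t x • gvec g ∧
    deriv (fun s => θ s x) t + ⟪u t x, grad (θ t) x⟫ = 0 ∧
    divg (u t) x = 0 ∧
    Periodic2 L (u t) ∧ Periodic2 L (θ t) ∧ Periodic2 L (p t)

/-- Squared `L²` norm (on the fundamental domain) of a vector field. -/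
def l2V (L : ℝ) (u : E2 → E2) : ℝ := ∫ x in Q L, ‖u x‖^2

/-- Squared `L²` norm of a scalar field. -/
def l2S (L : ℝ) (f : E2 → ℝ) : ℝ := ∫ x in Q L, (f x)^2

/-- Squared (homogeneous) `H¹` norm of a vector field. -/
def h1V (L : ℝ) (u : E2 → E2) : ℝ := ∫ x in Q L, ∑ i, ‖grad (fun y => u y i) x‖^2

/-- Mean-free scalar field. -/
def MeanFreeS (L : ℝ) (f : E2 → ℝ) : Prop := (∫ x in Q L, f x) = 0

/-- Mean-free vector field. -/
def MeanFreeV (L : ℝ) (u : E2 → E2) : Prop := (∫ x in Q L, u x) = 0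


/-! ### Auxiliary material for the plane-wave theorem -/

namespace PlaneWaveAux

lemma e2_add_apply (x y : E2) (i : Fin 2) : (x + y) i = x i + y i := rfl
lemma e2_smul_apply (a : ℝ) (x : E2) (i : Fin 2) : (a • x) i = a * x i := rfl
lemma e2_zero_apply (i : Fin 2) : (0 : E2) i = 0 := rfl

lemma single_eq_smul_eb (a : ℝ) (i : Fin 2) : EuclideanSpace.single i a = a • eb i := by
  ext j; by_cases hj : j = i <;> simp [eb, EuclideanSpace.single_apply, hj, e2_smul_apply]

lemma eb_apply (i j : Fin 2) : eb i j = if j = i then 1 else 0 := by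
  simp [eb, EuclideanSpace.single_apply]

/-- The components of the gradient are the partial derivatives. -/
lemma grad_apply (f : E2 → ℝ) (x : E2) (i : Fin 2) : grad f x i = pd f i x := by
  have h1 : (gradient f x) i = ⟪EuclideanSpace.single i (1:ℝ), gradient f x⟫ := by
    rw [EuclideanSpace.inner_single_left]; norm_num
  rw [grad, pd, h1, real_inner_comm]
  exact InnerProductSpace.toDual_symm_apply

/-- Clairaut/Schwarz for `C^∞` functions, in terms of iterated directional derivatives. -/
lemma schwarz (f : E2 → ℝ) (hf : ContDiff ℝ (⊤ : ℕ∞) f) (x v w : E2) :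
    fderiv ℝ (fun y => fderiv ℝ f y v) x w = fderiv ℝ (fun y => fderiv ℝ f y w) x v := by
  have hd : DifferentiableAt ℝ (fderiv ℝ f) x :=
    ((hf.of_le (m := ((⊤ : ℕ∞) : WithTop ℕ∞)) (by simp)).fderiv_right (m := 1) (WithTop.coe_le_coe.mpr le_top)).differentiable (by simp) x
  have key : ∀ a b : E2, fderiv ℝ (fun y => fderiv ℝ f y a) x b
      = fderiv ℝ (fderiv ℝ f) x b a := by
    intro a b
    have h1 : (fun y => fderiv ℝ f y a)
        = (ContinuousLinearMap.apply ℝ ℝ a) ∘ (fderiv ℝ f) := rfl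
    rw [h1, fderiv_comp x (ContinuousLinearMap.apply ℝ ℝ a).differentiableAt hd]
    simp
  rw [key v w, key w v]
  exact ((hf.contDiffAt (x := x)).isSymmSndFDerivAt (by norm_num; exact WithTop.coe_le_coe.mpr (le_top : ((2:ℕ∞) ≤ ⊤)))) w v

lemma gvec_apply0 (g : ℝ) : gvec g 0 = 0 := by
  simp [gvec, EuclideanSpace.single_apply]

lemma gvec_apply1 (g : ℝ) : gvec g 1 = g := by
  simp [gvec, EuclideanSpace.single_apply]

end PlaneWaveAux

open PlaneWaveAux in
/-- **Necessary form of plane-wave solutions.**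
If `(u, θ)` is a plane-wave solution of the 2D semi-dissipative Boussinesq system with
`u = (f(k·x,t), f(k·x,t))`, `θ = h(k·x)`, `k₁ + k₂ = 0`, `k ≠ 0`, `f, h` mean-free and
`L`-periodic, and a (smooth, periodic) pressure determined by the equations, then
necessarily `f` solves the heat equation `∂ₜ f = ν|k|² f_zz + (g/2) h`, and
`p_{x₁} = −(g/2) h(k·x)`, `p_{x₂} = (g/2) h(k·x)`. -/
theorem plane_wave_necessity (ν g L : ℝ) (hν : 0 < ν) (hL : 0 < L)
    (k₁ k₂ : ℤ) (hk : k₁ + k₂ = 0) (hk_ne : ¬(k₁ = 0 ∧ k₂ = 0))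
    (h : ℝ → ℝ) (f : ℝ → ℝ → ℝ) (p : ℝ → E2 → ℝ)
    (hh_sm : ContDiff ℝ (⊤ : ℕ∞) h)
    (hh_per : ∀ z, h (z + L) = h z) (hh_mf : (∫ z in (0:ℝ)..L, h z) = 0)
    (hf_sm : ContDiff ℝ (⊤ : ℕ∞) (Function.uncurry f))
    (hf_per : ∀ t z, f t (z + L) = f t z)
    (hf_mf : ∀ t, (∫ z in (0:ℝ)..L, f t z) = 0)
    (hp_sm : ∀ t, ContDiff ℝ (⊤ : ℕ∞) (p t))
    (hsol : Boussinesq ν g L Set.univ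
      (fun t x => EuclideanSpace.single 0 (f t ((k₁:ℝ) * x 0 + (k₂:ℝ) * x 1))
        + EuclideanSpace.single 1 (f t ((k₁:ℝ) * x 0 + (k₂:ℝ) * x 1)))
      (fun _ x => h ((k₁:ℝ) * x 0 + (k₂:ℝ) * x 1)) p) :
    (∀ t z : ℝ, deriv (fun s => f s z) t
        = ν * ((k₁:ℝ) ^ 2 + (k₂:ℝ) ^ 2) * deriv (deriv (f t)) z + (g / 2) * h z) ∧
      (∀ t : ℝ, ∀ x : E2,
        pd (p t) 0 x = -(g / 2) * h ((k₁:ℝ) * x 0 + (k₂:ℝ) * x 1) ∧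
        pd (p t) 1 x = (g / 2) * h ((k₁:ℝ) * x 0 + (k₂:ℝ) * x 1)) := by
  classical
  -- The wave covector as a continuous linear functional.
  set κ : E2 →L[ℝ] ℝ :=
    (k₁:ℝ) • EuclideanSpace.proj 0 + (k₂:ℝ) • EuclideanSpace.proj 1 with hκdef
  have hκ : ∀ x : E2, κ x = (k₁:ℝ) * x 0 + (k₂:ℝ) * x 1 := by intro x; simp [hκdef]
  have hκ0 : κ (eb 0) = (k₁:ℝ) := by simp [hκdef, eb, EuclideanSpace.single_apply]
  have hκ1 : κ (eb 1) = (k₂:ℝ) := by simp [hκdef, eb, EuclideanSpace.single_apply]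
  have hk1 : (k₁:ℝ) ≠ 0 := by
    intro h0
    have h0' : k₁ = 0 := by exact_mod_cast h0
    exact hk_ne ⟨h0', by omega⟩
  have hk2 : (k₂:ℝ) = -(k₁:ℝ) := by
    have : k₂ = -k₁ := by omega
    exact_mod_cast this
  set w : E2 := eb 0 + eb 1 with hwdef
  have hw : ∀ i, w i = 1 := by
    intro i; fin_cases i <;> simp [hwdef, e2_add_apply, eb_apply]
  have hκw : κ w = 0 := by
    rw [hwdef, _root_.map_add, hκ0, hκ1, hk2]; ring
  -- Smoothness of the various slices.
  have hone : ((⊤:ℕ∞) : WithTop ℕ∞) ≠ 0 := by simp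
  have hft : ∀ t, ContDiff ℝ (⊤ : ℕ∞) (f t) := fun t => hf_sm.comp (contDiff_const.prodMk contDiff_id)
  have hh_c : ContDiff ℝ (⊤:ℕ∞) h := hh_sm.of_le (by simp)
  set D1 : ℝ → ℝ → ℝ := fun t => deriv (f t) with hD1def
  set D2 : ℝ → ℝ → ℝ := fun t => deriv (deriv (f t)) with hD2def
  have hD1 : ∀ t, ContDiff ℝ (⊤:ℕ∞) (D1 t) := fun t =>
    (contDiff_infty_iff_deriv.mp ((hft t).of_le (by simp))).2
  have hD1' : ∀ t, Differentiable ℝ (D1 t) := fun t => (hD1 t).differentiable hone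
  have hfdiff : ∀ t, Differentiable ℝ (f t) := fun t => (hft t).differentiable (by simp)
  set F : ℝ → E2 → ℝ := fun t y => f t (κ y) with hFdef
  have hFder : ∀ t (y : E2), HasFDerivAt (F t) (D1 t (κ y) • (κ : E2 →L[ℝ] ℝ)) y := fun t y =>
    ((hfdiff t (κ y)).hasDerivAt).comp_hasFDerivAt y κ.hasFDerivAt
  -- Rewrite the given solution in plane-wave form.
  have hU : (fun t (x : E2) => EuclideanSpace.single 0 (f t ((k₁:ℝ) * x 0 + (k₂:ℝ) * x 1))
        + EuclideanSpace.single 1 (f t ((k₁:ℝ) * x 0 + (k₂:ℝ) * x 1)))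
      = fun t x => F t x • w := by
    funext s y
    rw [← hκ y, single_eq_smul_eb, single_eq_smul_eb, hwdef, smul_add]
  have hΘ : (fun (_ : ℝ) (x : E2) => h ((k₁:ℝ) * x 0 + (k₂:ℝ) * x 1))
      = fun (_ : ℝ) x => h (κ x) := by
    funext s y; rw [← hκ y]
  rw [hU, hΘ] at hsol
  have hmom : ∀ t (x : E2),
      deriv (fun s => F s x • w) t + fderiv ℝ (fun y => F t y • w) x (F t x • w)
        + grad (p t) x = ν • vecLap (fun y => F t y • w) x + h (κ x) • gvec g :=
    fun t x => (hsol t (Set.mem_univ t) x).1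
  have hpper : ∀ t, Periodic2 L (p t) := fun t => (hsol t (Set.mem_univ t) 0).2.2.2.2.2
  -- Time derivative.
  have hT1 : ∀ t (x : E2),
      deriv (fun s => F s x • w) t = (deriv (fun s => f s (κ x)) t) • w := by
    intro t x
    have hd : Differentiable ℝ (fun s => f s (κ x)) :=
      (hf_sm.comp (contDiff_id.prodMk contDiff_const)).differentiable (by simp)
    exact ((hd t).hasDerivAt.smul_const w).deriv
  -- The nonlinear term vanishes.
  have hT2 : ∀ t (x : E2), fderiv ℝ (fun y => F t y • w) x (F t x • w) = 0 := by
    intro t x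
    rw [((hFder t x).smul_const w).fderiv]
    simp only [ContinuousLinearMap.smulRight_apply, ContinuousLinearMap.smul_apply,
      ContinuousLinearMap.map_smul, hκw, smul_eq_mul, mul_zero, zero_smul, smul_zero]
  -- The dissipative term.
  have hT4 : ∀ t (x : E2), vecLap (fun y => F t y • w) x
      = (((k₁:ℝ)^2 + (k₂:ℝ)^2) * D2 t (κ x)) • w := by
    intro t x
    have hcomp : ∀ j : Fin 2, (fun y : E2 => (F t y • w) j) = F t := by
      intro j; funext y; rw [e2_smul_apply, hw j, mul_one]
    have hpdF : ∀ i : Fin 2, (fun y : E2 => fderiv ℝ (F t) y (eb i))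
        = fun y : E2 => κ (eb i) * D1 t (κ y) := by
      intro i; funext y
      rw [(hFder t y).fderiv]
      simp only [ContinuousLinearMap.smul_apply, smul_eq_mul]
      ring
    have hstep : ∀ i : Fin 2, pd (fun y => pd (F t) i y) i x
        = κ (eb i) * (κ (eb i) * D2 t (κ x)) := by
      intro i
      simp only [pd]
      rw [hpdF i]
      have h1 : HasFDerivAt (fun y : E2 => D1 t (κ y))
          (D2 t (κ x) • (κ : E2 →L[ℝ] ℝ)) x :=
        ((hD1' t (κ x)).hasDerivAt).comp_hasFDerivAt x κ.hasFDerivAt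
      rw [(h1.const_mul (κ (eb i))).fderiv]
      simp only [ContinuousLinearMap.smul_apply, smul_eq_mul]
      ring
    have hlap : lap (F t) x = ((k₁:ℝ)^2 + (k₂:ℝ)^2) * D2 t (κ x) := by
      rw [lap, Fin.sum_univ_two, hstep 0, hstep 1, hκ0, hκ1]; ring
    rw [vecLap, Fin.sum_univ_two, hcomp 0, hcomp 1, hlap,
      single_eq_smul_eb, single_eq_smul_eb, hwdef, smul_add]
  -- The component equations of the momentum equation.
  have heq : ∀ t (x : E2),
      (deriv (fun s => f s (κ x)) t + pd (p t) 0 x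
        = ν * (((k₁:ℝ)^2 + (k₂:ℝ)^2) * D2 t (κ x)))
      ∧ (deriv (fun s => f s (κ x)) t + pd (p t) 1 x
        = ν * (((k₁:ℝ)^2 + (k₂:ℝ)^2) * D2 t (κ x)) + g * h (κ x)) := by
    intro t x
    have e := hmom t x
    rw [hT1, hT2, hT4] at e
    have e0 := congrArg (fun v : E2 => v 0) e
    have e1 := congrArg (fun v : E2 => v 1) e
    simp only [e2_add_apply, e2_smul_apply, e2_zero_apply, grad_apply, hw,
      gvec_apply0, gvec_apply1, mul_one, mul_zero, add_zero] at e0 e1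
    constructor
    · linarith [e0]
    · linarith [e1]
  -- The main argument, for each fixed time.
  have main : ∀ t : ℝ,
      (∀ z : ℝ, deriv (fun s => f s z) t
          = ν * ((k₁:ℝ)^2 + (k₂:ℝ)^2) * D2 t z + (g/2) * h z)
      ∧ (∀ x : E2, pd (p t) 0 x = -(g/2) * h (κ x) ∧ pd (p t) 1 x = (g/2) * h (κ x)) := by
    intro t
    set A : E2 → ℝ := fun x => pd (p t) 0 x with hAdef
    set B : E2 → ℝ := fun x => pd (p t) 1 x with hBdef
    have hAsm : ContDiff ℝ (⊤:ℕ∞) A :=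
      ((ContinuousLinearMap.apply ℝ ℝ (eb 0)).contDiff).comp
        (((hp_sm t).of_le (m := ((⊤ : ℕ∞) : WithTop ℕ∞)) (by simp)).fderiv_right (by simp))
    set sec : ℝ → E2 := fun z => (z / (k₁:ℝ)) • eb 0 with hsecdef
    have hsec : ∀ z, κ (sec z) = z := by
      intro z; rw [hsecdef]
      simp only [ContinuousLinearMap.map_smul, hκ0, smul_eq_mul]
      field_simp
    have hsecsm : ContDiff ℝ (⊤:ℕ∞) sec := (contDiff_id.div_const _).smul contDiff_const
    have hAexpr : ∀ x : E2, A x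
        = ν * (((k₁:ℝ)^2 + (k₂:ℝ)^2) * D2 t (κ x)) - deriv (fun s => f s (κ x)) t := by
      intro x
      have h0 := (heq t x).1
      rw [hAdef]; linarith [h0]
    set Φ : ℝ → ℝ := fun z => A (sec z) with hΦdef
    have hAΦ : ∀ x : E2, A x = Φ (κ x) := by
      intro x
      show A x = A (sec (κ x))
      rw [hAexpr x, hAexpr (sec (κ x)), hsec]
    have hΦdiff : Differentiable ℝ Φ :=
      (hAsm.differentiable hone).comp (hsecsm.differentiable hone)
    have hAder : ∀ x : E2, HasFDerivAt A (deriv Φ (κ x) • (κ : E2 →L[ℝ] ℝ)) x := by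
      intro x
      rw [funext hAΦ]
      exact ((hΦdiff (κ x)).hasDerivAt).comp_hasFDerivAt x κ.hasFDerivAt
    have hBA : ∀ x : E2, B x = A x + g * h (κ x) := by
      intro x
      have h0 := (heq t x).1
      have h1 := (heq t x).2
      rw [hAdef, hBdef]; linarith [h0, h1]
    have hBder : ∀ x : E2,
        HasFDerivAt B ((deriv Φ (κ x) + g * deriv h (κ x)) • (κ : E2 →L[ℝ] ℝ)) x := by
      intro x
      rw [funext hBA]
      have h2 : HasFDerivAt (fun y : E2 => g * h (κ y))
          ((g * deriv h (κ x)) • (κ : E2 →L[ℝ] ℝ)) x := by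
        have h3 := (((hh_c.differentiable hone (κ x)).hasDerivAt).comp_hasFDerivAt
          x κ.hasFDerivAt).const_mul g
        rw [smul_smul] at h3
        exact h3
      have h4 := (hAder x).add h2
      rw [← add_smul] at h4
      exact h4
    -- Clairaut's theorem.
    have hswz : ∀ x : E2, fderiv ℝ B x (eb 0) = fderiv ℝ A x (eb 1) := by
      intro x
      rw [hAdef, hBdef]
      simp only [pd]
      exact schwarz (p t) (hp_sm t) x (eb 1) (eb 0)
    have hkey : ∀ z : ℝ, deriv Φ z * (k₂:ℝ)
        = deriv Φ z * (k₁:ℝ) + g * deriv h z * (k₁:ℝ) := by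
      intro z
      have h1 := hswz (sec z)
      rw [(hBder (sec z)).fderiv, (hAder (sec z)).fderiv] at h1
      simp only [ContinuousLinearMap.smul_apply, smul_eq_mul, hκ0, hκ1, hsec] at h1
      linarith [h1]
    have hΦ' : ∀ z, deriv Φ z = -(g/2) * deriv h z := by
      intro z
      have h1 := hkey z
      rw [hk2] at h1
      have h2 : (k₁:ℝ) * (2 * deriv Φ z + g * deriv h z) = 0 := by linear_combination -h1
      have h3 := (mul_eq_zero.mp h2).resolve_left hk1
      linarith [h3]
    -- Φ + (g/2) h is constant.
    set Ψ : ℝ → ℝ := fun z => Φ z + (g/2) * h z with hΨdef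
    have hΨdiff : Differentiable ℝ Ψ :=
      hΦdiff.add ((hh_c.differentiable hone).const_mul (g/2))
    have hΨ' : ∀ z, deriv Ψ z = 0 := by
      intro z
      have h1 : HasDerivAt Ψ (deriv Φ z + (g/2) * deriv h z) z :=
        ((hΦdiff z).hasDerivAt).add (((hh_c.differentiable hone z).hasDerivAt).const_mul (g/2))
      rw [h1.deriv, hΦ' z]; ring
    have hconst : ∀ z, Ψ z = Ψ 0 := fun z => is_const_of_deriv_eq_zero hΨdiff hΨ' z 0
    -- The constant vanishes, by periodicity of the pressure.
    have hAsec : ∀ s : ℝ, A (s • eb 0) = Ψ 0 - (g/2) * h ((k₁:ℝ) * s) := by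
      intro s
      have h1 : κ (s • eb 0) = (k₁:ℝ) * s := by
        rw [ContinuousLinearMap.map_smul, hκ0, smul_eq_mul, mul_comm]
      rw [hAΦ, h1]
      have h2 : Φ ((k₁:ℝ) * s) + (g/2) * h ((k₁:ℝ) * s) = Ψ 0 := hconst ((k₁:ℝ) * s)
      linarith [h2]
    have hHder : ∀ s : ℝ, HasDerivAt (fun s : ℝ => p t (s • eb 0))
        (Ψ 0 - (g/2) * h ((k₁:ℝ) * s)) s := by
      intro s
      have h1 : HasDerivAt (fun s : ℝ => s • eb 0) (eb 0) s := by
        simpa using (hasDerivAt_id s).smul_const (eb 0)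
      have h2 := (((hp_sm t).differentiable (by simp) (s • eb 0)).hasFDerivAt).comp_hasDerivAt s h1
      rw [show fderiv ℝ (p t) (s • eb 0) (eb 0) = A (s • eb 0) from rfl, hAsec s] at h2
      exact h2
    have hhcont : Continuous h := hh_c.continuous
    have hGint : IntervalIntegrable (fun s : ℝ => Ψ 0 - (g/2) * h ((k₁:ℝ) * s))
        MeasureTheory.volume 0 L := Continuous.intervalIntegrable (by fun_prop) 0 L
    have hi2 : IntervalIntegrable (fun s : ℝ => (g/2) * h ((k₁:ℝ) * s))
        MeasureTheory.volume 0 L := Continuous.intervalIntegrable (by fun_prop) 0 L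
    have hFTC : ∫ s in (0:ℝ)..L, (Ψ 0 - (g/2) * h ((k₁:ℝ) * s))
        = p t ((L:ℝ) • eb 0) - p t ((0:ℝ) • eb 0) :=
      intervalIntegral.integral_eq_sub_of_hasDerivAt (fun s _ => hHder s) hGint
    have hPL : p t ((L:ℝ) • eb 0) = p t ((0:ℝ) • eb 0) := by
      have h1 := hpper t 0 0
      rw [zero_add] at h1
      rw [zero_smul]; exact h1
    have hint : ∀ a b : ℝ, IntervalIntegrable h MeasureTheory.volume a b :=
      fun a b => (hh_c.continuous).intervalIntegrable a b
    have hper : Function.Periodic h L := hh_per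
    have hIz : ∫ s in (0:ℝ)..((k₁:ℝ) * L), h s = 0 := by
      have h1 := hper.intervalIntegral_add_zsmul_eq k₁ 0 hint
      rw [zero_add, zero_add, hh_mf, smul_zero] at h1
      rw [show ((k₁:ℤ) • L) = (k₁:ℝ) * L from zsmul_eq_mul L k₁] at h1
      exact h1
    have hIh : ∫ s in (0:ℝ)..L, h ((k₁:ℝ) * s) = 0 := by
      rw [intervalIntegral.integral_comp_mul_left h hk1]
      rw [mul_zero, hIz, smul_zero]
    have hc0 : Ψ 0 = 0 := by
      have h1 : ∫ s in (0:ℝ)..L, (Ψ 0 - (g/2) * h ((k₁:ℝ) * s)) = L * Ψ 0 := by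
        rw [intervalIntegral.integral_sub (intervalIntegrable_const) hi2]
        rw [intervalIntegral.integral_const]
        have h2 : ∫ s in (0:ℝ)..L, (g/2) * h ((k₁:ℝ) * s) = 0 := by
          rw [intervalIntegral.integral_const_mul, hIh, mul_zero]
        rw [h2, sub_zero, sub_zero, smul_eq_mul]
      rw [h1, hPL, sub_self] at hFTC
      rcases mul_eq_zero.mp hFTC with h9 | h9
      · exact absurd h9 (ne_of_gt hL)
      · exact h9
    have hΦval : ∀ z, Φ z = -(g/2) * h z := by
      intro z
      have h1 : Φ z + (g/2) * h z = Ψ 0 := hconst z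
      rw [hc0] at h1
      linarith [h1]
    refine ⟨?_, ?_⟩
    · intro z
      have h0 := (heq t (sec z)).1
      rw [hsec] at h0
      have h2 : pd (p t) 0 (sec z) = -(g/2) * h z := by
        rw [show pd (p t) 0 (sec z) = A (sec z) from rfl, hAΦ, hsec, hΦval]
      rw [h2] at h0
      linarith [h0]
    · intro x
      have h2 : A x = -(g/2) * h (κ x) := by rw [hAΦ, hΦval]
      have h3 : B x = (g/2) * h (κ x) := by rw [hBA, h2]; ring
      exact ⟨h2, h3⟩
  refine ⟨fun t z => by have := (main t).1 z; rw [hD2def] at this; linarith [this], ?_⟩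
  intro t x
  obtain ⟨h0, h1⟩ := (main t).2 x
  rw [← hκ x]
  exact ⟨h0, h1⟩
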